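/- arXiv:2005.05022 — 2 statements merged into one kernel-verified Lean document; each statement's English description precedes it below -/
import Mathlib

section
/- There exists a universal constant $C > 0$ such that for all natural numbers $j$ and all $l$ with $0 \le l \le j$, one has $\min\{l+1,\, j-l+1\} \cdot \sqrt{\frac{(j-l)!\, l!}{j!}} \le C$. -/
private lemma aux_two_pow_le_centralBinom : ∀ m : ℕ, 2 ^ m ≤ Nat.centralBinom m := by
  intro m
  induction m with
  | zero => simp [Nat.centralBinom_zero]
  | succ n ih =>
    have h := Nat.succ_mul_centralBinom_succ n
    have h2 : (n + 1) * (2 * Nat.centralBinom n) ≤ (n + 1) * Nat.centralBinom (n + 1) := by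
      rw [h]
      have : (n + 1) * (2 * Nat.centralBinom n) ≤ 2 * (2 * n + 1) * Nat.centralBinom n := by
        nlinarith [Nat.centralBinom_pos n]
      linarith
    have h3 : 2 * Nat.centralBinom n ≤ Nat.centralBinom (n + 1) :=
      Nat.le_of_mul_le_mul_left h2 (Nat.succ_pos n)
    calc 2 ^ (n + 1) = 2 * 2 ^ n := by ring
    _ ≤ 2 * Nat.centralBinom n := by omega
    _ ≤ Nat.centralBinom (n + 1) := h3

private lemma aux_sq_le : ∀ m : ℕ, (m + 1) ^ 2 ≤ 4 * 2 ^ m := by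
  intro m
  induction m using Nat.strong_induction_on with
  | _ m ih =>
    match m with
    | 0 => decide
    | 1 => decide
    | 2 => decide
    | (n + 3) =>
      have h := ih n (by omega)
      have hp : 1 ≤ 2 ^ n := Nat.one_le_two_pow
      have : 4 * 2 ^ (n + 3) = 8 * (4 * 2 ^ n) := by ring
      nlinarith

private lemma aux_nat_key (j l : ℕ) (hl : l ≤ j) :
    (min (l + 1) (j - l + 1)) ^ 2 ≤ 4 * Nat.choose j l := by
  set m := min l (j - l) with hm
  have hmin : min (l + 1) (j - l + 1) = m + 1 := by omega
  have h2m : 2 * m ≤ j := by omega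
  have hch : Nat.choose j m ≤ Nat.choose j l := by
    rcases le_or_gt l (j - l) with h | h
    · have : m = l := by omega
      rw [this]
    · have : m = j - l := by omega
      rw [this, ← Nat.choose_symm hl]
  calc (min (l + 1) (j - l + 1)) ^ 2 = (m + 1) ^ 2 := by rw [hmin]
  _ ≤ 4 * 2 ^ m := aux_sq_le m
  _ ≤ 4 * Nat.centralBinom m := by
      have := aux_two_pow_le_centralBinom m; omega
  _ = 4 * Nat.choose (2 * m) m := by rw [Nat.centralBinom_eq_two_mul_choose]
  _ ≤ 4 * Nat.choose j m := by
      have := Nat.choose_le_choose m h2m; omega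
  _ ≤ 4 * Nat.choose j l := by omega

theorem min_mul_sqrt_inv_choose_bounded :
    ∃ C : ℝ, 0 < C ∧ ∀ j l : ℕ, l ≤ j →
      ((min (l + 1) (j - l + 1) : ℕ) : ℝ) *
        Real.sqrt (((Nat.factorial (j - l) : ℝ) * (Nat.factorial l : ℝ)) / (Nat.factorial j : ℝ))
        ≤ C := by
  refine ⟨2, by norm_num, fun j l hl => ?_⟩
  set a : ℝ := ((min (l + 1) (j - l + 1) : ℕ) : ℝ) with ha
  have ha0 : 0 ≤ a := Nat.cast_nonneg _
  set x : ℝ := ((Nat.factorial (j - l) : ℝ) * (Nat.factorial l : ℝ)) / (Nat.factorial j : ℝ)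
    with hx
  have hx0 : 0 ≤ x := by
    apply div_nonneg <;> positivity
  have hchoose : (Nat.choose j l : ℝ) * (Nat.factorial l : ℝ) * (Nat.factorial (j - l) : ℝ)
      = (Nat.factorial j : ℝ) := by
    exact_mod_cast congrArg (Nat.cast : ℕ → ℝ) (Nat.choose_mul_factorial_mul_factorial hl)
  have hcpos : (0 : ℝ) < (Nat.choose j l : ℝ) := by
    exact_mod_cast Nat.choose_pos hl
  have hxeq : x = 1 / (Nat.choose j l : ℝ) := by
    rw [hx]
    field_simp
    nlinarith [hchoose]
  have hkey : a ^ 2 * x ≤ 4 := by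
    rw [hxeq]
    rw [mul_one_div, div_le_iff₀ hcpos]
    rw [ha]
    exact_mod_cast aux_nat_key j l hl
  have : a * Real.sqrt x = Real.sqrt (a ^ 2 * x) := by
    rw [Real.sqrt_mul (by positivity), Real.sqrt_sq ha0]
  rw [this]
  calc Real.sqrt (a ^ 2 * x) ≤ Real.sqrt 4 := Real.sqrt_le_sqrt hkey
  _ = 2 := by
      rw [show (4 : ℝ) = 2 ^ 2 by norm_num, Real.sqrt_sq (by norm_num)]
end

section
/- There exists a universal constant $C > 0$ such that for all natural numbers $j \ge 1$ and all $l$ with $0 \le l \le j-1$, one has $(j-l+1)^{1/2}\,\min\{l+1, j-l+1\}\,\frac{(l+1)^{3/2}}{(j+1)^{1/2}(l+2)^{1/2}}\,\Big(\frac{(j-l)!\, l!}{j!}\Big)^{1/2} \le C$. -/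
/-!
With `m = j - l ≥ 1`, the square of the quantity equals
`(m + 1) * min (l + 1) (m + 1) ^ 2 * (l + 1) ^ 3 / ((l + m + 1) * (l + 2) * (l + m).choose l)`.
Writing `s ≤ t` for `l, m` in increasing order, the lower bound
`(t + 1) * 2 ^ s ≤ 2 * (s + t).choose s` (for `s ≥ 1`) lets the binomial coefficient absorb the
factor `t + 1` together with `(s + 1) ^ 3 ≤ 27 * 2 ^ s`; the remaining factors `l + 1` are
cancelled by `l + m + 1` and `l + 2`.
-/

open Nat

namespace Nat

theorem succ_pow_three_le_mul_two_pow (n : ℕ) : (n + 1) ^ 3 ≤ 27 * 2 ^ n := by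
  have hdiv : n / 3 + 1 ≤ 2 ^ (n / 3) := Nat.lt_two_pow_self
  calc (n + 1) ^ 3 ≤ (3 * (n / 3 + 1)) ^ 3 := by gcongr; omega
    _ = 27 * (n / 3 + 1) ^ 3 := by ring
    _ ≤ 27 * (2 ^ (n / 3)) ^ 3 := by gcongr
    _ = 27 * 2 ^ (3 * (n / 3)) := by rw [← pow_mul, Nat.mul_comm (n / 3)]
    _ ≤ 27 * 2 ^ n := by gcongr <;> omega

/-- Each factor `(t + i) / i` of `(s + t).choose s` is at least `2` for `i ≤ t`, the first one
is `t + 1`. -/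
theorem succ_mul_two_pow_le_two_mul_choose {s t : ℕ} (hs : 1 ≤ s) (hst : s ≤ t) :
    (t + 1) * 2 ^ s ≤ 2 * (s + t).choose s := by
  induction s, hs using Nat.le_induction with
  | base => simp [Nat.add_comm 1 t, Nat.mul_comm]
  | succ s hs ih =>
    have hrec := Nat.add_one_mul_choose_eq (s + t) s
    rw [show s + t + 1 = s + 1 + t by omega] at hrec
    have hle : (t + 1) * 2 ^ (s + 1) * (s + 1) ≤ 2 * (s + 1 + t).choose (s + 1) * (s + 1) :=
      calc (t + 1) * 2 ^ (s + 1) * (s + 1) = (t + 1) * 2 ^ s * (2 * (s + 1)) := by ring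
        _ ≤ 2 * (s + t).choose s * (s + 1 + t) := Nat.mul_le_mul (ih (by omega)) (by omega)
        _ = 2 * (s + 1 + t).choose (s + 1) * (s + 1) := by
          rw [mul_assoc, mul_assoc, ← hrec, mul_comm (s + 1 + t)]
    exact Nat.le_of_mul_le_mul_right hle (by omega)

theorem succ_pow_three_mul_succ_le_choose {s t : ℕ} (hs : 1 ≤ s) (hst : s ≤ t) :
    (s + 1) ^ 3 * (t + 1) ≤ 54 * (s + t).choose s :=
  calc (s + 1) ^ 3 * (t + 1) ≤ 27 * ((t + 1) * 2 ^ s) := by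
        nlinarith [succ_pow_three_le_mul_two_pow s]
    _ ≤ 27 * (2 * (s + t).choose s) :=
        Nat.mul_le_mul_left 27 (succ_mul_two_pow_le_two_mul_choose hs hst)
    _ = 54 * (s + t).choose s := by ring

theorem succ_mul_succ_mul_min_sq_le_choose {l m : ℕ} (hl : 1 ≤ l) (hm : 1 ≤ m) :
    (l + 1) * (m + 1) * (min l m + 1) ^ 2 ≤ 54 * (l + m).choose l := by
  rcases le_total l m with hlm | hml
  · rw [min_eq_left hlm]
    linarith [succ_pow_three_mul_succ_le_choose hl hlm]
  · rw [min_eq_right hml, Nat.choose_symm_add, Nat.add_comm l m]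
    linarith [succ_pow_three_mul_succ_le_choose hm hml]

end Nat

theorem gevrey_coefficient_sq_numerator_le {l m : ℕ} (hm : 1 ≤ m) :
    (m + 1) * min (l + 1) (m + 1) ^ 2 * (l + 1) ^ 3 ≤
      54 * ((l + m + 1) * (l + 2)) * (l + m).choose l := by
  rw [show min (l + 1) (m + 1) = min l m + 1 by omega]
  rcases Nat.eq_zero_or_pos l with rfl | hl
  · simp only [Nat.zero_min, Nat.zero_add, Nat.choose_zero_right]
    nlinarith
  · have hchoose := succ_mul_succ_mul_min_sq_le_choose hl hm
    calc (m + 1) * (min l m + 1) ^ 2 * (l + 1) ^ 3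
        = (l + 1) * (m + 1) * (min l m + 1) ^ 2 * (l + 1) * (l + 1) := by ring
      _ ≤ 54 * (l + m).choose l * (l + m + 1) * (l + 2) := by gcongr <;> omega
      _ = 54 * ((l + m + 1) * (l + 2)) * (l + m).choose l := by ring

theorem Real.rpow_div_two_sq {x : ℝ} (hx : 0 ≤ x) (r : ℝ) : (x ^ (r / 2)) ^ 2 = x ^ r := by
  rw [← Real.rpow_natCast, ← Real.rpow_mul hx]
  norm_num

theorem gevrey_coefficient_sq_le (l m : ℕ) (hm : 1 ≤ m) :
    ((m + 1 : ℕ) : ℝ) * ((min (l + 1) (m + 1) : ℕ) : ℝ) ^ 2 *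
      (((l : ℝ) + 1) ^ 3 / ((((l + m : ℕ) : ℝ) + 1) * ((l : ℝ) + 2))) *
      ((m ! : ℝ) * l ! / (l + m)!) ≤ 54 := by
  have key : (((m + 1) * min (l + 1) (m + 1) ^ 2 * (l + 1) ^ 3 : ℕ) : ℝ) ≤
      ((54 * ((l + m + 1) * (l + 2)) * (l + m).choose l : ℕ) : ℝ) :=
    Nat.cast_le.mpr (gevrey_coefficient_sq_numerator_le hm)
  rw [← Nat.add_choose_mul_factorial_mul_factorial l m, ← Nat.choose_symm_add]
  push_cast at key ⊢
  have hC : (0 : ℝ) < (l + m).choose l := by exact_mod_cast Nat.choose_pos (by omega)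
  field_simp
  linarith

theorem gevrey_convolution_coefficient_bounded :
    ∃ C : ℝ, 0 < C ∧ ∀ j l : ℕ, 1 ≤ j → l ≤ j - 1 →
      (((j - l + 1 : ℕ) : ℝ)) ^ ((1 : ℝ) / 2) *
        ((min (l + 1) (j - l + 1) : ℕ) : ℝ) *
        (((l : ℝ) + 1) ^ ((3 : ℝ) / 2) /
          (((j : ℝ) + 1) ^ ((1 : ℝ) / 2) * ((l : ℝ) + 2) ^ ((1 : ℝ) / 2))) *
        ((((Nat.factorial (j - l) : ℝ) * (Nat.factorial l : ℝ)) / (Nat.factorial j : ℝ))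
          ^ ((1 : ℝ) / 2))
        ≤ C := by
  refine ⟨√54, by positivity, fun j l hj hl => ?_⟩
  obtain ⟨m, rfl⟩ : ∃ m, j = l + m := ⟨j - l, by omega⟩
  rw [Nat.add_sub_cancel_left]
  refine (le_abs_self _).trans (Real.abs_le_sqrt ?_)
  simp (disch := positivity) only [mul_pow, div_pow, Real.rpow_div_two_sq, Real.rpow_one,
    Real.rpow_ofNat]
  exact gevrey_coefficient_sq_le l m (by omega)
end
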